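/- Let n be a positive integer and r a rational parameter. Suppose rational sequences a_i (playing the role of a_i^{(1)}) and b_i are given with b_i = 0 whenever i ≤ 1 or i > n, and a_i = 0 whenever i ≥ n or i ≤ 0. Let A be the tridiagonal n×n matrix with A_{i,i} = r + b_i + a_i, A_{i,i−1} = b_i, A_{i,i+1} = a_i. Assume that for every 0 ≤ k ≤ n−2 there is a constant λ(k) such that b_{i+1} − b_i − a_{i+1+k} + a_{i+k} = λ(k) for all 1 ≤ i ≤ n−k. Then, with U the n×n matrix with entries U_{i,j} = C(n−i, n−j), U · A · U⁻¹ is lower bidiagonal with (i,i)-entry r + a_i + (n−i)(b_{i+1} − b_i), (i,i−1)-entry b_i, and all other entries 0. -/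

import Mathlib

lemma h1q (m k : ℕ) : ((k:ℚ)+1) * (m.choose (k+1)) = ((m:ℚ) - k) * (m.choose k) := by
  rcases le_or_gt k m with h | h
  · have h2 := Nat.choose_succ_right_eq m k
    have h3 : ((m.choose (k+1) * (k+1) : ℕ) : ℚ) = ((m.choose k * (m - k) : ℕ) : ℚ) := by
      exact_mod_cast congrArg Nat.cast h2
    push_cast [Nat.cast_sub h] at h3
    linarith
  · rw [Nat.choose_eq_zero_of_lt h, Nat.choose_eq_zero_of_lt (lt_trans h (Nat.lt_succ_self k))]
    simp

lemma entry (n I J : ℕ) (hI : I < n) (hJ : J < n) (c r : ℚ)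
    (a b : ℤ → ℚ)
    (ha0 : a 0 = 0)
    (hCFa : ∀ t : ℤ, 1 ≤ t → t ≤ (n:ℤ) + 1 → a t = c/2 * ((n:ℚ)-(t:ℚ))*((n:ℚ)+1-(t:ℚ)))
    (hCFb : ∀ t : ℤ, 1 ≤ t → t ≤ (n:ℤ) + 1 → b t = c/2 * ((n:ℚ)+1-(t:ℚ))*(1-(t:ℚ))) :
    ((n-(I+1)).choose (n-(J+1)) : ℚ) * (r + b ((J:ℤ)+1) + a ((J:ℤ)+1))
      + ((n-(I+1)).choose (n-(J+2)) : ℚ) * b ((J:ℤ)+2)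
      + ((n-(I+1)).choose (n-J) : ℚ) * a (J:ℤ)
    = (r + a ((I:ℤ)+1) + ((n:ℚ) - ((I:ℚ)+1)) * (b ((I:ℤ)+2) - b ((I:ℤ)+1)))
        * ((n-(I+1)).choose (n-(J+1)) : ℚ)
      + b ((I:ℤ)+1) * ((n-I).choose (n-(J+1)) : ℚ) := by
  -- replace the a J term
  have haJ : ((n-(I+1)).choose (n-J) : ℚ) * a (J:ℤ)
      = ((n-(I+1)).choose (n-J) : ℚ) * (c/2 * ((n:ℚ)-(J:ℚ))*((n:ℚ)+1-(J:ℚ))) := by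
    rcases Nat.eq_zero_or_pos J with hJ0 | hJ0
    · subst hJ0
      rw [Nat.choose_eq_zero_of_lt (by omega : n - (I+1) < n - 0)]
      simp [ha0]
    · rw [hCFa (J:ℤ) (by exact_mod_cast hJ0) (by omega)]
      norm_num
  rw [haJ,
    hCFb ((J:ℤ)+1) (by omega) (by omega),
    hCFa ((J:ℤ)+1) (by omega) (by omega),
    hCFb ((J:ℤ)+2) (by omega) (by omega),
    hCFa ((I:ℤ)+1) (by omega) (by omega),
    hCFb ((I:ℤ)+2) (by omega) (by omega),
    hCFb ((I:ℤ)+1) (by omega) (by omega)]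
  push_cast
  -- introduce m, s
  obtain ⟨m, hm, hIm⟩ : ∃ m, n - (I+1) = m ∧ I + 1 + m = n := ⟨n - (I+1), rfl, by omega⟩
  obtain ⟨s, hs, hJs⟩ : ∃ s, n - (J+1) = s ∧ J + 1 + s = n := ⟨n - (J+1), rfl, by omega⟩
  have h2 : n - (J+2) = s - 1 := by omega
  have h3 : n - J = s + 1 := by omega
  have h4 : n - I = m + 1 := by omega
  rw [hm, hs, h2, h3, h4]
  have hIq : (I:ℚ) = (n:ℚ) - 1 - m := by
    have : ((I + 1 + m : ℕ) : ℚ) = (n:ℚ) := by exact_mod_cast congrArg Nat.cast hIm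
    push_cast at this; linarith
  have hJq : (J:ℚ) = (n:ℚ) - 1 - s := by
    have : ((J + 1 + s : ℕ) : ℚ) = (n:ℚ) := by exact_mod_cast congrArg Nat.cast hJs
    push_cast at this; linarith
  rw [hIq, hJq]
  rcases s with _ | s'
  · -- s = 0 : J = n - 1
    norm_num [Nat.choose_one_right]
    push_cast
    ring
  · have hsub : s' + 1 - 1 = s' := rfl
    rw [hsub]
    have hp : ((m+1).choose (s'+1) : ℚ) = (m.choose s' : ℚ) + (m.choose (s'+1) : ℚ) := by
      have := Nat.choose_succ_succ m s'
      exact_mod_cast congrArg Nat.cast this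
    have e1 := h1q m s'
    have e2 := h1q m (s'+1)
    push_cast at e1 e2 hp ⊢
    linear_combination
      (-(c/2)*((n:ℚ)-1-((s':ℚ)+1)-(m:ℚ))) * e1
      + ((c/2)*((s':ℚ)+3)) * e2
      + (-(c/2)*((m:ℚ)+1)*(1-(n:ℚ)+(m:ℚ))) * hp


lemma cf (n : ℕ) (hn : 0 < n)
    (a b : ℤ → ℚ) (lam : ℕ → ℚ)
    (hb : ∀ i : ℤ, (i ≤ 1 ∨ (n : ℤ) < i) → b i = 0)
    (ha : ∀ i : ℤ, ((n : ℤ) ≤ i ∨ i ≤ 0) → a i = 0)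
    (hlam : ∀ k : ℕ, k + 2 ≤ n → ∀ i : ℤ, 1 ≤ i → i ≤ (n : ℤ) - (k : ℤ) →
      b (i + 1) - b i - a (i + 1 + (k : ℤ)) + a (i + (k : ℤ)) = lam k) :
    ∃ c : ℚ,
      (∀ t : ℤ, 1 ≤ t → t ≤ (n:ℤ) + 1 → a t = c/2 * ((n:ℚ)-(t:ℚ))*((n:ℚ)+1-(t:ℚ))) ∧
      (∀ t : ℤ, 1 ≤ t → t ≤ (n:ℤ) + 1 → b t = c/2 * ((n:ℚ)+1-(t:ℚ))*(1-(t:ℚ))) := by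
  rcases eq_or_lt_of_le (show 1 ≤ n from hn) with h1 | h2
  · -- n = 1
    refine ⟨0, ?_, ?_⟩ <;> intro t ht1 ht2 <;> rw [← h1] at ht2
    · rw [ha t (Or.inl (by omega))]; ring
    · rw [hb t (by omega)]; ring
  -- n ≥ 2 : cleaned first-difference relation
  have hD : ∀ i : ℤ, 1 ≤ i → i ≤ (n:ℤ) → b (i+1) - b i - a (i+1) + a i = lam 0 := by
    intro i h1 h2
    have := hlam 0 (by omega) i h1 (by push_cast; omega)
    push_cast at this
    simpa using this
  rcases eq_or_lt_of_le (show 2 ≤ n from h2) with h2' | h3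
  · -- n = 2
    subst h2'
    have hb1 : b 1 = 0 := hb 1 (by omega)
    have hb3 : b 3 = 0 := hb 3 (by omega)
    have ha2 : a 2 = 0 := ha 2 (by omega)
    have ha3 : a 3 = 0 := ha 3 (by omega)
    have e1 := hD 1 (by omega) (by omega)
    have e2 := hD 2 (by omega) (by omega)
    norm_num [hb1, hb3, ha2, ha3] at e1 e2
    have hb2 : b 2 = - a 1 / 2 := by linarith
    refine ⟨a 1, ?_, ?_⟩ <;> intro t ht1 ht2 <;> have ht2' : t ≤ 3 := by omega
    · interval_cases t
      · push_cast; ring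
      · rw [ha2]; push_cast; ring
      · rw [ha3]; push_cast; ring
    · interval_cases t
      · rw [hb1]; push_cast; ring
      · rw [hb2]; push_cast; ring
      · rw [hb3]; push_cast; ring
  · -- n ≥ 3
    set c : ℚ := lam 0 - lam 1 with hc
    have h2nd : ∀ i : ℤ, 1 ≤ i → i ≤ (n:ℤ) - 1 → a (i+2) - 2 * a (i+1) + a i = c := by
      intro i h1 h2
      have e0 := hD i h1 (by omega)
      have e1 := hlam 1 (by omega) i h1 (by push_cast; omega)
      push_cast at e1
      rw [show i + 1 + (1:ℤ) = i + 2 by ring] at e1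
      rw [hc]; linarith
    -- downward induction for a
    have keya : ∀ d : ℕ, ∀ t : ℤ, t = (n:ℤ) + 1 - d → 1 ≤ t →
        a t = c/2 * ((n:ℚ)-(t:ℚ))*((n:ℚ)+1-(t:ℚ)) := by
      intro d
      induction d using Nat.strong_induction_on with
      | _ d ih =>
        intro t hteq ht1
        match d, hteq with
        | 0, hteq =>
          have : t = (n:ℤ) + 1 := by omega
          subst this
          rw [ha _ (Or.inl (by omega))]
          push_cast; ring
        | 1, hteq =>
          have : t = (n:ℤ) := by omega
          subst this
          rw [ha _ (Or.inl le_rfl)]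
          push_cast; ring
        | (d+2), hteq =>
          have ht2 : t ≤ (n:ℤ) - 1 := by omega
          have e := h2nd t ht1 ht2
          have i1 := ih (d+1) (by omega) (t+1) (by omega) (by omega)
          have i2 := ih d (by omega) (t+2) (by omega) (by omega)
          push_cast at i1 i2 ⊢
          linarith [e, i1, i2]
    have CFa : ∀ t : ℤ, 1 ≤ t → t ≤ (n:ℤ) + 1 →
        a t = c/2 * ((n:ℚ)-(t:ℚ))*((n:ℚ)+1-(t:ℚ)) := by
      intro t ht1 ht2
      exact keya ((n:ℤ) + 1 - t).toNat t (by omega) ht1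
    -- upward induction for b
    have keyb : ∀ d : ℕ, (d:ℤ) ≤ (n:ℤ) →
        b ((d:ℤ) + 1) = (d:ℚ) * lam 0 + a ((d:ℤ) + 1) - a 1 := by
      intro d
      induction d with
      | zero => intro _; simp [hb 1 (Or.inl le_rfl)]
      | succ d ih =>
        intro hd
        have e := hD ((d:ℤ) + 1) (by omega) (by omega)
        have ihh := ih (by omega)
        push_cast at e ihh ⊢
        linarith
    have hnq : (n:ℚ) ≠ 0 := by positivity
    have hlam0 : lam 0 = c/2 * ((n:ℚ) - 1) := by
      have e := keyb n le_rfl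
      rw [hb ((n:ℤ) + 1) (Or.inr (by omega)), ha ((n:ℤ) + 1) (Or.inl (by omega)),
        CFa 1 le_rfl (by omega)] at e
      push_cast at e
      apply mul_left_cancel₀ hnq
      linear_combination -e
    have CFb : ∀ t : ℤ, 1 ≤ t → t ≤ (n:ℤ) + 1 →
        b t = c/2 * ((n:ℚ)+1-(t:ℚ))*(1-(t:ℚ)) := by
      intro t ht1 ht2
      have e := keyb (t - 1).toNat (by omega)
      have harg : (((t-1).toNat : ℤ)) = t - 1 := Int.toNat_of_nonneg (by omega)
      rw [harg, show t - 1 + 1 = t from by ring] at e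
      have hdq : (((t-1).toNat : ℕ) : ℚ) = (t:ℚ) - 1 := by
        exact_mod_cast congrArg (fun z : ℤ => (z : ℚ)) harg
      rw [e, hdq, CFa t ht1 ht2, CFa 1 le_rfl (by omega), hlam0]
      push_cast
      ring
    exact ⟨c, CFa, CFb⟩

lemma sum_ite_val {n : ℕ} (f : Fin n → ℚ) (t : ℕ) (ht : t < n) :
    (∑ k : Fin n, if (k : ℕ) = t then f k else 0) = f ⟨t, ht⟩ := by
  rw [Finset.sum_eq_single (⟨t, ht⟩ : Fin n)]
  · rw [if_pos rfl]
  · intro k _ hk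
    exact if_neg (fun h => hk (Fin.ext (show (k:ℕ) = t from h)))
  · intro h; exact absurd (Finset.mem_univ _) h

lemma sum_ite_val_zero {n : ℕ} (f : Fin n → ℚ) (t : ℕ) (ht : n ≤ t) :
    (∑ k : Fin n, if (k : ℕ) = t then f k else 0) = 0 := by
  apply Finset.sum_eq_zero
  intro k _
  exact if_neg (fun h => by have := k.isLt; omega)

/-- The specialization of the generalized theorem to a single
superdiagonal (`a_i = a_i^{(1)}`, all higher `a^{(t)}` zero). With the
constancy hypothesis `b_{i+1} - b_i - a_{i+1+k} + a_{i+k} = λ(k)` for all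
`1 ≤ i ≤ n - k`, `0 ≤ k ≤ n-2`, conjugating the tridiagonal matrix `A` by `U`
yields the lower bidiagonal matrix with diagonal entries
`r + a_i + (n-i)(b_{i+1} - b_i)` and subdiagonal entries `b_i`. -/
theorem stmt_10 (n : ℕ) (hn : 0 < n) (r : ℚ)
    (a b : ℤ → ℚ) (lam : ℕ → ℚ)
    (hb : ∀ i : ℤ, (i ≤ 1 ∨ (n : ℤ) < i) → b i = 0)
    (ha : ∀ i : ℤ, ((n : ℤ) ≤ i ∨ i ≤ 0) → a i = 0)
    (hlam : ∀ k : ℕ, k + 2 ≤ n → ∀ i : ℤ, 1 ≤ i → i ≤ (n : ℤ) - (k : ℤ) →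
      b (i + 1) - b i - a (i + 1 + (k : ℤ)) + a (i + (k : ℤ)) = lam k)
    (A U : Matrix (Fin n) (Fin n) ℚ)
    (hA : ∀ i j : Fin n, A i j =
      if i.val = j.val then r + b ((i.val : ℤ) + 1) + a ((i.val : ℤ) + 1)
      else if i.val = j.val + 1 then b ((i.val : ℤ) + 1)
      else if j.val = i.val + 1 then a ((i.val : ℤ) + 1)
      else 0)
    (hU : ∀ i j : Fin n, U i j = ((n - (i.val + 1)).choose (n - (j.val + 1)) : ℚ)) :
    U * A * U⁻¹ = fun i j =>
      if i.val = j.val then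
        r + a ((i.val : ℤ) + 1)
          + ((n : ℚ) - ((i.val : ℚ) + 1)) * (b ((i.val : ℤ) + 2) - b ((i.val : ℤ) + 1))
      else if i.val = j.val + 1 then b ((i.val : ℤ) + 1)
      else 0 := by
  set L : Matrix (Fin n) (Fin n) ℚ := fun i j =>
      if i.val = j.val then
        r + a ((i.val : ℤ) + 1)
          + ((n : ℚ) - ((i.val : ℚ) + 1)) * (b ((i.val : ℤ) + 2) - b ((i.val : ℤ) + 1))
      else if i.val = j.val + 1 then b ((i.val : ℤ) + 1)
      else 0 with hL
  have hdetU : U.det = 1 := by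
    have htri : U.BlockTriangular id := by
      intro i j hij
      rw [hU]
      norm_cast
      exact Nat.choose_eq_zero_of_lt (by simp only [id] at hij; omega)
    rw [Matrix.det_of_upperTriangular htri]
    apply Finset.prod_eq_one
    intro i _
    rw [hU, Nat.choose_self]
    norm_num
  have hUdet : IsUnit U.det := by rw [hdetU]; exact isUnit_one
  suffices hUA : U * A = L * U by
    show U * A * U⁻¹ = L
    rw [hUA, Matrix.mul_nonsing_inv_cancel_right _ _ hUdet]
  ext i j
  rw [Matrix.mul_apply, Matrix.mul_apply]
  have hsplit : ∀ k : Fin n, U i k * A k j =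
      (if (k:ℕ) = (j:ℕ) then U i k * (r + b ((j.val:ℤ)+1) + a ((j.val:ℤ)+1)) else 0)
      + (if (k:ℕ) = (j:ℕ)+1 then U i k * b ((j.val:ℤ)+2) else 0)
      + (if (j:ℕ) = (k:ℕ)+1 then U i k * a ((j.val:ℤ)) else 0) := by
    intro k
    rw [hA k j]
    rcases eq_or_ne (k:ℕ) (j:ℕ) with h1 | h1
    · rw [if_pos h1, if_pos h1, if_neg (by omega), if_neg (by omega),
        show ((k.val:ℤ)+1) = ((j.val:ℤ)+1) by omega]
      ring
    · rw [if_neg h1, if_neg h1]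
      rcases eq_or_ne (k:ℕ) ((j:ℕ)+1) with h2 | h2
      · rw [if_pos h2, if_pos h2, if_neg (by omega),
          show ((k.val:ℤ)+1) = ((j.val:ℤ)+2) by omega]
        ring
      · rw [if_neg h2, if_neg h2]
        rcases eq_or_ne (j:ℕ) ((k:ℕ)+1) with h3 | h3
        · rw [if_pos h3, if_pos h3,
            show ((k.val:ℤ)+1) = ((j.val:ℤ)) by omega]
          ring
        · rw [if_neg h3, if_neg h3]; ring
  rw [Finset.sum_congr rfl (fun k _ => hsplit k), Finset.sum_add_distrib,
    Finset.sum_add_distrib]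
  have S1 : (∑ k : Fin n, if (k:ℕ) = (j:ℕ) then U i k * (r + b ((j.val:ℤ)+1) + a ((j.val:ℤ)+1)) else 0)
      = ((n - (i.val+1)).choose (n - (j.val+1)) : ℚ) * (r + b ((j.val:ℤ)+1) + a ((j.val:ℤ)+1)) := by
    rw [sum_ite_val _ _ j.isLt]
    rw [show (⟨(j:ℕ), j.isLt⟩ : Fin n) = j from Fin.ext rfl, hU i j]
  have S2 : (∑ k : Fin n, if (k:ℕ) = (j:ℕ)+1 then U i k * b ((j.val:ℤ)+2) else 0)
      = ((n - (i.val+1)).choose (n - (j.val+2)) : ℚ) * b ((j.val:ℤ)+2) := by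
    rcases lt_or_ge ((j:ℕ)+1) n with hj | hj
    · rw [sum_ite_val _ _ hj, hU]
    · have hbz : b ((j.val:ℤ)+2) = 0 := hb _ (Or.inr (by have := j.isLt; omega))
      rw [hbz, mul_zero, sum_ite_val_zero _ _ hj]
  have S3 : (∑ k : Fin n, if (j:ℕ) = (k:ℕ)+1 then U i k * a ((j.val:ℤ)) else 0)
      = ((n - (i.val+1)).choose (n - j.val) : ℚ) * a ((j.val:ℤ)) := by
    rcases Nat.eq_zero_or_pos (j:ℕ) with hj | hj
    · have haz : a ((j.val:ℤ)) = 0 := ha _ (Or.inr (by omega))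
      rw [haz, mul_zero, Finset.sum_eq_zero]
      intro k _
      exact if_neg (by omega)
    · have hcong : ∀ k : Fin n, (if (j:ℕ) = (k:ℕ)+1 then U i k * a ((j.val:ℤ)) else 0)
          = (if (k:ℕ) = (j:ℕ)-1 then U i k * a ((j.val:ℤ)) else 0) := by
        intro k
        rcases eq_or_ne ((j:ℕ)) ((k:ℕ)+1) with h | h
        · rw [if_pos h, if_pos (by omega)]
        · rw [if_neg h, if_neg (by omega)]
      rw [Finset.sum_congr rfl (fun k _ => hcong k), sum_ite_val _ _ (by omega : (j:ℕ)-1 < n), hU]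
      congr 2
      congr 1
      show n - ((j:ℕ)-1+1) = n - (j:ℕ)
      omega
  rw [S1, S2, S3]
  have hsplitL : ∀ k : Fin n, L i k * U k j =
      (if (i:ℕ) = (k:ℕ) then (r + a ((i.val:ℤ)+1)
          + ((n:ℚ) - ((i.val:ℚ)+1)) * (b ((i.val:ℤ)+2) - b ((i.val:ℤ)+1))) * U k j else 0)
      + (if (i:ℕ) = (k:ℕ)+1 then b ((i.val:ℤ)+1) * U k j else 0) := by
    intro k
    rw [hL]
    simp only []
    rcases eq_or_ne (i:ℕ) (k:ℕ) with h1 | h1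
    · rw [if_pos h1, if_pos h1, if_neg (by omega)]
      ring
    · rw [if_neg h1, if_neg h1]
      rcases eq_or_ne (i:ℕ) ((k:ℕ)+1) with h2 | h2
      · rw [if_pos h2, if_pos h2]; ring
      · rw [if_neg h2, if_neg h2]; ring
  rw [Finset.sum_congr rfl (fun k _ => hsplitL k), Finset.sum_add_distrib]
  have T1 : (∑ k : Fin n, if (i:ℕ) = (k:ℕ) then (r + a ((i.val:ℤ)+1)
          + ((n:ℚ) - ((i.val:ℚ)+1)) * (b ((i.val:ℤ)+2) - b ((i.val:ℤ)+1))) * U k j else 0)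
      = (r + a ((i.val:ℤ)+1)
          + ((n:ℚ) - ((i.val:ℚ)+1)) * (b ((i.val:ℤ)+2) - b ((i.val:ℤ)+1)))
        * ((n - (i.val+1)).choose (n - (j.val+1)) : ℚ) := by
    have hcong : ∀ k : Fin n, (if (i:ℕ) = (k:ℕ) then (r + a ((i.val:ℤ)+1)
          + ((n:ℚ) - ((i.val:ℚ)+1)) * (b ((i.val:ℤ)+2) - b ((i.val:ℤ)+1))) * U k j else 0)
        = (if (k:ℕ) = (i:ℕ) then (r + a ((i.val:ℤ)+1)
          + ((n:ℚ) - ((i.val:ℚ)+1)) * (b ((i.val:ℤ)+2) - b ((i.val:ℤ)+1))) * U k j else 0) := by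
      intro k
      rcases eq_or_ne ((i:ℕ)) ((k:ℕ)) with h | h
      · rw [if_pos h, if_pos h.symm]
      · rw [if_neg h, if_neg (Ne.symm h)]
    rw [Finset.sum_congr rfl (fun k _ => hcong k), sum_ite_val _ _ i.isLt,
      show (⟨(i:ℕ), i.isLt⟩ : Fin n) = i from Fin.ext rfl, hU i j]
  have T2 : (∑ k : Fin n, if (i:ℕ) = (k:ℕ)+1 then b ((i.val:ℤ)+1) * U k j else 0)
      = b ((i.val:ℤ)+1) * ((n - i.val).choose (n - (j.val+1)) : ℚ) := by
    rcases Nat.eq_zero_or_pos (i:ℕ) with hi | hi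
    · have hbz : b ((i.val:ℤ)+1) = 0 := hb _ (Or.inl (by omega))
      rw [hbz, zero_mul, Finset.sum_eq_zero]
      intro k _
      exact if_neg (by omega)
    · have hcong : ∀ k : Fin n, (if (i:ℕ) = (k:ℕ)+1 then b ((i.val:ℤ)+1) * U k j else 0)
          = (if (k:ℕ) = (i:ℕ)-1 then b ((i.val:ℤ)+1) * U k j else 0) := by
        intro k
        rcases eq_or_ne ((i:ℕ)) ((k:ℕ)+1) with h | h
        · rw [if_pos h, if_pos (by omega)]
        · rw [if_neg h, if_neg (by omega)]
      rw [Finset.sum_congr rfl (fun k _ => hcong k), sum_ite_val _ _ (by omega : (i:ℕ)-1 < n), hU]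
      congr 3
      show n - ((i:ℕ)-1+1) = n - (i:ℕ)
      omega
  rw [T1, T2]
  obtain ⟨c, hCFa, hCFb⟩ := cf n hn a b lam hb ha hlam
  have ha0 : a 0 = 0 := ha 0 (Or.inr le_rfl)
  exact entry n i.val j.val i.isLt j.isLt c r a b ha0 hCFa hCFb
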